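/- (Correctness of Algorithm 1) Let X be an n1 × n2 × n3 complex tensor. For each k, let X̄^(k) = U_k Σ_k V_k^H be a singular value decomposition of the k-th Fourier-domain frontal slice of X. Define tensors U, S, V by taking the inverse mode-3 DFT of the tensors whose k-th frontal slices are U_k, Σ_k, V_k respectively. Then X = U ∗ S ∗ V^H, U and V are orthogonal tensors, and S is f-diagonal. -/

import Mathlib

open Matrix
open scoped BigOperators ComplexConjugate

noncomputable section

/-- Circular convolution of two vectors of length `n`, indexed by `ZMod n`. -/
def cconv {n : ℕ} [NeZero n] (a b : ZMod n → ℂ) : ZMod n → ℂ :=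
  fun k => ∑ t : ZMod n, a t * b (k - t)

/-- Unnormalized discrete Fourier transform with ω = exp(-2πi/n):
`dft x k = ∑ t, x t * ω ^ (k*t)`. -/
def dft {n : ℕ} [NeZero n] (x : ZMod n → ℂ) : ZMod n → ℂ :=
  fun k => ∑ t : ZMod n, x t * Complex.exp (-(2 * Real.pi * Complex.I) / n) ^ (k * t).val

/-- A third-order complex tensor of size n1 × n2 × n3 (third index taken modulo n3). -/
abbrev Tensor (n1 n2 n3 : ℕ) := Fin n1 → Fin n2 → ZMod n3 → ℂ

/-- The t-product: the (i,j)-th mode-3 tube of `A ∗ B` is `∑ k, A(i,k,·) ⋆ B(k,j,·)`. -/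
def tProd {n1 n2 n4 n3 : ℕ} [NeZero n3] (A : Tensor n1 n2 n3) (B : Tensor n2 n4 n3) :
    Tensor n1 n4 n3 :=
  fun i j => ∑ k : Fin n2, cconv (A i k) (B k j)

/-- Mode-3 DFT: apply the DFT to every mode-3 tube. -/
def mdft {n1 n2 n3 : ℕ} [NeZero n3] (X : Tensor n1 n2 n3) : Tensor n1 n2 n3 :=
  fun i j => dft (X i j)

/-- The k-th frontal fslice of a tensor, as a matrix. -/
def fslice {n1 n2 n3 : ℕ} (X : Tensor n1 n2 n3) (k : ZMod n3) : Matrix (Fin n1) (Fin n2) ℂ :=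
  Matrix.of fun i j => X i j k

/-- Conjugate transpose of a tensor: conjugate-transpose each frontal fslice and reverse
the order of the transposed slices 2 through n3, i.e. `Xᴴ(i,j,t) = conj (X j i (-t))`. -/
def tconj {n1 n2 n3 : ℕ} (X : Tensor n1 n2 n3) : Tensor n2 n1 n3 :=
  fun i j t => (starRingEnd ℂ) (X j i (-t))

/-- The identity tensor: first frontal fslice is the identity matrix, others are zero. -/
def tId (n n3 : ℕ) : Tensor n n n3 :=
  fun i j t => if t = 0 ∧ i = j then 1 else 0

/-- A tensor `Q` is orthogonal if `Q ∗ Qᴴ = Qᴴ ∗ Q = I`. -/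
def TOrthogonal {n n3 : ℕ} [NeZero n3] (Q : Tensor n n n3) : Prop :=
  tProd Q (tconj Q) = tId n n3 ∧ tProd (tconj Q) Q = tId n n3

/-- A tensor is f-diagonal if each of its frontal slices is a diagonal matrix. -/
def FDiagonal {n1 n2 n3 : ℕ} (S : Tensor n1 n2 n3) : Prop :=
  ∀ (i : Fin n1) (j : Fin n2) (k : ZMod n3), (i : ℕ) ≠ (j : ℕ) → S i j k = 0

/-- Frobenius norm of a tensor. -/
def frob {n1 n2 n3 : ℕ} [NeZero n3] (X : Tensor n1 n2 n3) : ℝ :=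
  Real.sqrt (∑ i : Fin n1, ∑ j : Fin n2, ∑ t : ZMod n3, ‖X i j t‖ ^ 2)

/-- Frobenius norm of a matrix. -/
def frobM {m n : ℕ} (M : Matrix (Fin m) (Fin n) ℂ) : ℝ :=
  Real.sqrt (∑ i : Fin m, ∑ j : Fin n, ‖M i j‖ ^ 2)

/-- Nuclear norm of a matrix: the sum of its singular values,
i.e. of the square roots of the eigenvalues of `Mᴴ * M`. -/
def nuclearNorm {m n : ℕ} (M : Matrix (Fin m) (Fin n) ℂ) : ℝ :=
  ∑ j : Fin n, Real.sqrt ((Matrix.isHermitian_conjTranspose_mul_self M).eigenvalues j)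

/-- The tensor nuclear norm: sum of the nuclear norms of the Fourier-domain frontal slices. -/
def tnn {n1 n2 n3 : ℕ} [NeZero n3] (X : Tensor n1 n2 n3) : ℝ :=
  ∑ k : ZMod n3, nuclearNorm (fslice (mdft X) k)


/-- Inverse unnormalized DFT: `idft x t = (1/n) ∑ k, x k * exp(2πi/n) ^ (k*t)`. -/
def idft {n : ℕ} [NeZero n] (x : ZMod n → ℂ) : ZMod n → ℂ :=
  fun t => (n : ℂ)⁻¹ *
    ∑ k : ZMod n, x k * Complex.exp (2 * Real.pi * Complex.I / n) ^ (k * t).val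

/-- Inverse mode-3 DFT of a family of frontal slices: the tensor whose mode-3 tubes are
the inverse DFTs of the tubes of the stacked slices. -/
def stackIdft {a b n3 : ℕ} [NeZero n3] (Ms : ZMod n3 → Matrix (Fin a) (Fin b) ℂ) :
    Tensor a b n3 :=
  fun i j => idft fun k => Ms k i j

/-! The mode-3 DFT turns the t-product into the product of corresponding Fourier-domain
frontal slices, the tensor conjugate transpose into the slicewise conjugate transpose and the
identity tensor into identity slices, and it is injective. So each claim about `U`, `S`, `V`
reduces, slice by slice, to the matching property of the factors `U_k`, `Σ_k`, `V_k`.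
Identifying `dft` and `idft` with Mathlib's `ZMod.dft` and its inverse gives Fourier
inversion for free. -/

open scoped ZMod

section DFT

variable {n : ℕ} [NeZero n]

theorem exp_pow_val_eq_stdAddChar (a : ZMod n) :
    Complex.exp (2 * Real.pi * Complex.I / n) ^ a.val = ZMod.stdAddChar a := by
  rw [ZMod.stdAddChar_apply, ZMod.toCircle_apply, ← Complex.exp_nat_mul]
  ring_nf

theorem dft_eq_zmod_dft (x : ZMod n → ℂ) : dft x = 𝓕 x := by
  funext k
  rw [ZMod.dft_apply]
  refine Finset.sum_congr rfl fun t _ => ?_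
  rw [neg_div, Complex.exp_neg, inv_pow, exp_pow_val_eq_stdAddChar, smul_eq_mul, mul_comm,
    mul_comm k t, AddChar.map_neg_eq_inv]

theorem idft_eq_zmod_invDFT (x : ZMod n → ℂ) : idft x = 𝓕⁻ x := by
  funext t
  rw [ZMod.invDFT_apply, idft, smul_eq_mul]
  congr 1
  refine Finset.sum_congr rfl fun k _ => ?_
  rw [exp_pow_val_eq_stdAddChar, smul_eq_mul, mul_comm]

theorem dft_idft (x : ZMod n → ℂ) : dft (idft x) = x := by
  rw [dft_eq_zmod_dft, idft_eq_zmod_invDFT, LinearEquiv.apply_symm_apply]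

theorem dft_injective : Function.Injective (dft : (ZMod n → ℂ) → ZMod n → ℂ) := by
  simpa only [funext dft_eq_zmod_dft] using ZMod.dft.injective

theorem dft_sum {ι : Type*} (s : Finset ι) (x : ι → ZMod n → ℂ) :
    dft (∑ l ∈ s, x l) = ∑ l ∈ s, dft (x l) := by
  simp only [dft_eq_zmod_dft, map_sum]

theorem dft_cconv (a b : ZMod n → ℂ) : dft (cconv a b) = dft a * dft b := by
  funext k
  simp only [dft_eq_zmod_dft, ZMod.dft_apply, smul_eq_mul, Pi.mul_apply, cconv]
  rw [Finset.sum_mul_sum]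
  simp only [Finset.mul_sum]
  rw [Finset.sum_comm]
  refine Finset.sum_congr rfl fun t _ => ?_
  refine Fintype.sum_equiv (Equiv.subRight t) _ _ fun s => ?_
  have hchar : ZMod.stdAddChar (-(s * k)) =
      ZMod.stdAddChar (-(t * k)) * ZMod.stdAddChar (-((s - t) * k)) := by
    rw [← AddChar.map_add_eq_mul]
    ring_nf
  rw [Equiv.subRight_apply, hchar]
  ring

theorem dft_conj_neg (x : ZMod n → ℂ) :
    dft (fun t => conj (x (-t))) = fun k => conj (dft x k) := by
  funext k
  simp only [dft_eq_zmod_dft, ZMod.dft_apply, smul_eq_mul, map_sum, map_mul]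
  refine Fintype.sum_equiv (Equiv.neg (ZMod n)) _ _ fun t => ?_
  rw [Equiv.neg_apply, ← AddChar.map_neg_eq_conj, neg_mul, neg_neg]

theorem dft_ite_eq_zero (c : ℂ) :
    dft (fun t : ZMod n => if t = 0 then c else 0) = fun _ => c := by
  funext k
  simp [dft_eq_zmod_dft, ZMod.dft_apply]

end DFT

section Tensor

variable {n1 n2 n3 : ℕ} [NeZero n3]

theorem fslice_mdft_tProd {n4 : ℕ} (A : Tensor n1 n2 n3) (B : Tensor n2 n4 n3) (k : ZMod n3) :
    fslice (mdft (tProd A B)) k = fslice (mdft A) k * fslice (mdft B) k := by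
  ext i j
  simp only [fslice, mdft, tProd, of_apply, mul_apply, dft_sum, Finset.sum_apply, dft_cconv,
    Pi.mul_apply]

theorem fslice_mdft_tconj (A : Tensor n1 n2 n3) (k : ZMod n3) :
    fslice (mdft (tconj A)) k = (fslice (mdft A) k)ᴴ := by
  ext i j
  simp only [fslice, mdft, of_apply, conjTranspose_apply, RCLike.star_def]
  exact congrFun (dft_conj_neg (A j i)) k

theorem fslice_mdft_tId (n : ℕ) (k : ZMod n3) : fslice (mdft (tId n n3)) k = 1 := by
  ext i j
  change dft (fun t => if t = 0 ∧ i = j then 1 else 0) k = (1 : Matrix (Fin n) (Fin n) ℂ) i j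
  simp only [ite_and, dft_ite_eq_zero, one_apply]

theorem fslice_mdft_stackIdft (Ms : ZMod n3 → Matrix (Fin n1) (Fin n2) ℂ) (k : ZMod n3) :
    fslice (mdft (stackIdft Ms)) k = Ms k := by
  ext i j
  simp only [fslice, mdft, stackIdft, of_apply, dft_idft]

theorem eq_of_fslice_mdft_eq {A B : Tensor n1 n2 n3}
    (h : ∀ k, fslice (mdft A) k = fslice (mdft B) k) : A = B := by
  funext i j
  exact dft_injective (funext fun k => congrFun (congrFun (h k) i) j)

theorem tOrthogonal_stackIdft {n : ℕ} {Q : ZMod n3 → Matrix (Fin n) (Fin n) ℂ}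
    (hQ : ∀ k, Q k ∈ unitaryGroup (Fin n) ℂ) : TOrthogonal (stackIdft Q) := by
  constructor <;> refine eq_of_fslice_mdft_eq fun k => ?_ <;>
    rw [fslice_mdft_tProd, fslice_mdft_tconj, fslice_mdft_stackIdft, fslice_mdft_tId]
  · exact mem_unitaryGroup_iff.1 (hQ k)
  · exact mem_unitaryGroup_iff'.1 (hQ k)

theorem fDiagonal_stackIdft {S : ZMod n3 → Matrix (Fin n1) (Fin n2) ℂ}
    (hS : ∀ k (i : Fin n1) (j : Fin n2), (i : ℕ) ≠ (j : ℕ) → S k i j = 0) :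
    FDiagonal (stackIdft S) := by
  intro i j k hij
  have hzero : (fun k => S k i j) = 0 := funext fun k => hS k i j hij
  simp only [stackIdft, hzero, idft_eq_zmod_invDFT, map_zero, Pi.zero_apply]

end Tensor

theorem tsvd_algorithm_correct_general {n1 n2 n3 : ℕ} [NeZero n3] (X : Tensor n1 n2 n3)
    (Uk : ZMod n3 → Matrix (Fin n1) (Fin n1) ℂ)
    (Sk : ZMod n3 → Matrix (Fin n1) (Fin n2) ℂ)
    (Vk : ZMod n3 → Matrix (Fin n2) (Fin n2) ℂ)
    (hUk : ∀ k, Uk k ∈ Matrix.unitaryGroup (Fin n1) ℂ)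
    (hVk : ∀ k, Vk k ∈ Matrix.unitaryGroup (Fin n2) ℂ)
    (hSkdiag : ∀ (k : ZMod n3) (i : Fin n1) (j : Fin n2), (i : ℕ) ≠ (j : ℕ) → Sk k i j = 0)
    (hX : ∀ k, fslice (mdft X) k = Uk k * Sk k * (Vk k)ᴴ) :
    X = tProd (tProd (stackIdft Uk) (stackIdft Sk)) (tconj (stackIdft Vk)) ∧
    TOrthogonal (stackIdft Uk) ∧ TOrthogonal (stackIdft Vk) ∧
    FDiagonal (stackIdft Sk) := by
  refine ⟨eq_of_fslice_mdft_eq fun k => ?_, tOrthogonal_stackIdft hUk,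
    tOrthogonal_stackIdft hVk, fDiagonal_stackIdft hSkdiag⟩
  rw [hX, fslice_mdft_tProd, fslice_mdft_tProd, fslice_mdft_tconj, fslice_mdft_stackIdft,
    fslice_mdft_stackIdft, fslice_mdft_stackIdft]

/-- correctness of the t-SVD algorithm: if `X̄⁽ᵏ⁾ = U_k Σ_k V_kᴴ` is an SVD
of each Fourier-domain frontal slice of `X`, and `U, S, V` are obtained by inverse mode-3
DFT of the stacked factors, then `X = U ∗ S ∗ Vᴴ`, `U` and `V` are orthogonal tensors,
and `S` is f-diagonal. -/
theorem tsvd_algorithm_correct {n1 n2 n3 : ℕ} [NeZero n3] (X : Tensor n1 n2 n3)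
    (Uk : ZMod n3 → Matrix (Fin n1) (Fin n1) ℂ)
    (Sk : ZMod n3 → Matrix (Fin n1) (Fin n2) ℂ)
    (Vk : ZMod n3 → Matrix (Fin n2) (Fin n2) ℂ)
    (hUk : ∀ k, Uk k ∈ Matrix.unitaryGroup (Fin n1) ℂ)
    (hVk : ∀ k, Vk k ∈ Matrix.unitaryGroup (Fin n2) ℂ)
    (hSkdiag : ∀ (k : ZMod n3) (i : Fin n1) (j : Fin n2), (i : ℕ) ≠ (j : ℕ) → Sk k i j = 0)
    (hSknn : ∀ (k : ZMod n3) (i : Fin n1) (j : Fin n2),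
      0 ≤ (Sk k i j).re ∧ (Sk k i j).im = 0)
    (hX : ∀ k, fslice (mdft X) k = Uk k * Sk k * (Vk k)ᴴ) :
    X = tProd (tProd (stackIdft Uk) (stackIdft Sk)) (tconj (stackIdft Vk)) ∧
    TOrthogonal (stackIdft Uk) ∧ TOrthogonal (stackIdft Vk) ∧
    FDiagonal (stackIdft Sk) :=
  tsvd_algorithm_correct_general X Uk Sk Vk hUk hVk hSkdiag hX

end
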